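/- In the symmetric group S₆, the permutations σ₁ = (1 2 3 4), σ₂ = (2 5 4 3), σ₃ = (1 5 6 4), σ₄ = (1 5 4 6) each have cycle structure [1,1,4], satisfy σ₁·σ₂·σ₃·σ₄ = identity, and the subgroup they generate acts transitively on {1,…,6}. Hence there exists a transitive product-one tuple in S₆ of length 4 with ramification type [[1²,4]⁴]. -/
import Mathlib

set_option maxHeartbeats 1600000


/-- Cycle structure of a permutation of `Fin d`, including fixed points as 1-cycles. -/
def fullCycleType {d : ℕ} (σ : Equiv.Perm (Fin d)) : Multiset ℕ :=
  σ.cycleType + Multiset.replicate (d - σ.cycleType.sum) 1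

/-- Product of a list of permutations, composed left-to-right
(apply the first permutation first). -/
def seqProd {d : ℕ} (l : List (Equiv.Perm (Fin d))) : Equiv.Perm (Fin d) :=
  l.foldr (fun σ acc => σ.trans acc) (Equiv.refl (Fin d))


def σ1 : Equiv.Perm (Fin 6) := c[0, 1, 2, 3]

def σ2 : Equiv.Perm (Fin 6) := c[1, 4, 3, 2]

def σ3 : Equiv.Perm (Fin 6) := c[0, 4, 5, 3]

def σ4 : Equiv.Perm (Fin 6) := c[0, 4, 3, 5]

lemma fct_aux (σ : Equiv.Perm (Fin 6)) (h : σ.IsCycle) (hs : σ.support.card = 4) :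
    fullCycleType σ = ({1, 1, 4} : Multiset ℕ) := by
  unfold fullCycleType
  rw [h.cycleType, hs]
  decide

lemma cyc_of_list (l : List (Fin 6)) (hn : (Cycle.ofList l).Nodup) (h2 : 2 ≤ l.length) :
    (Cycle.formPerm (Cycle.ofList l) hn).IsCycle := by
  refine Cycle.isCycle_formPerm _ _ ?_
  rw [Cycle.nontrivial_coe_nodup_iff (Cycle.nodup_coe_iff.mp hn)]
  exact h2

lemma fct1 : fullCycleType σ1 = ({1, 1, 4} : Multiset ℕ) :=
  fct_aux _ (cyc_of_list _ _ (by decide)) (by decide)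

lemma fct2 : fullCycleType σ2 = ({1, 1, 4} : Multiset ℕ) :=
  fct_aux _ (cyc_of_list _ _ (by decide)) (by decide)

lemma fct3 : fullCycleType σ3 = ({1, 1, 4} : Multiset ℕ) :=
  fct_aux _ (cyc_of_list _ _ (by decide)) (by decide)

lemma fct4 : fullCycleType σ4 = ({1, 1, 4} : Multiset ℕ) :=
  fct_aux _ (cyc_of_list _ _ (by decide)) (by decide)

/-- Words reaching each point from 0 using σ1 and σ3. -/
def w : Fin 6 → Equiv.Perm (Fin 6) := ![1, σ1, σ1 * σ1, σ1 * σ1 * σ1, σ3, σ3 * σ3]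

lemma w_zero : ∀ i : Fin 6, w i 0 = i := by decide

lemma trans_aux (S : Set (Equiv.Perm (Fin 6))) (h1 : σ1 ∈ S) (h3 : σ3 ∈ S) :
    ∀ x y : Fin 6, ∃ g ∈ Subgroup.closure S, g x = y := by
  have h1' := Subgroup.subset_closure h1
  have h3' := Subgroup.subset_closure h3
  have hw : ∀ i, w i ∈ Subgroup.closure S := by
    intro i
    fin_cases i
    · exact Subgroup.one_mem _
    · exact h1'
    · exact mul_mem h1' h1'
    · exact mul_mem (mul_mem h1' h1') h1'
    · exact h3'
    · exact mul_mem h3' h3'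
  intro x y
  refine ⟨w y * (w x)⁻¹, mul_mem (hw y) (inv_mem (hw x)), ?_⟩
  have : (w x)⁻¹ x = 0 := by
    rw [Equiv.Perm.inv_def, Equiv.symm_apply_eq, w_zero]
  simp [Equiv.Perm.mul_apply, this, w_zero y]

theorem stmt10 :
    (fullCycleType σ1 = ({1, 1, 4} : Multiset ℕ) ∧ fullCycleType σ2 = ({1, 1, 4} : Multiset ℕ) ∧ fullCycleType σ3 = ({1, 1, 4} : Multiset ℕ) ∧ fullCycleType σ4 = ({1, 1, 4} : Multiset ℕ)) ∧
    seqProd [σ1, σ2, σ3, σ4] = Equiv.refl (Fin 6) ∧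
    (∀ x y : Fin 6, ∃ g ∈ Subgroup.closure ({σ1, σ2, σ3, σ4} : Set (Equiv.Perm (Fin 6))), g x = y) ∧
    (∃ τ : Fin 4 → Equiv.Perm (Fin 6),
      (∀ i, fullCycleType (τ i) = ({1, 1, 4} : Multiset ℕ)) ∧
      seqProd (List.ofFn τ) = Equiv.refl (Fin 6) ∧
      (∀ x y : Fin 6, ∃ g ∈ Subgroup.closure (Set.range τ), g x = y)) := by
  refine ⟨⟨fct1, fct2, fct3, fct4⟩, by decide, ?_, ![σ1, σ2, σ3, σ4], ?_, ?_, ?_⟩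
  · exact trans_aux _ (by simp) (by simp)
  · intro i; fin_cases i <;> [exact fct1; exact fct2; exact fct3; exact fct4]
  · decide
  · refine trans_aux _ ⟨0, rfl⟩ ⟨2, rfl⟩
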